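/- arXiv:0707.1818 — 4 statements merged into one kernel-verified Lean document; each statement's English description precedes it below -/
import Mathlib

section
/- Let (⟨η^up_α : α < κ_up⟩, ⟨η^dn_β : β < κ_dn⟩) be a (κ_up,κ_dn)-peculiar cut, let A ⊆ ω be infinite, and let η : ω → ω. Then η <_{J^bd_A} η^up_α for every α < κ_up if and only if η <_{J^bd_A} η^dn_β for every large enough β < κ_dn (i.e., for all β above some β₀ < κ_dn). -/
/-- `f <* g` : `{n : f n ≥ g n}` is finite. -/
def LtStar (f g : ℕ → ℕ) : Prop := {n | g n ≤ f n}.Finite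

/-- `f ≤* g` : `{n : f n > g n}` is finite. -/
def LeStar (f g : ℕ → ℕ) : Prop := {n | g n < f n}.Finite

/-- `f <_{J^bd_A} g` : `{n ∈ A : f n ≥ g n}` is finite. -/
def LtBd (A : Set ℕ) (f g : ℕ → ℕ) : Prop := (A ∩ {n | g n ≤ f n}).Finite

/-- A `(κ_up,κ_dn)`-peculiar cut: `up` is the `<*`-decreasing upper family,
`dn` the `<*`-increasing lower family. -/
structure PeculiarCut (κup κdn : Cardinal) (up dn : Ordinal → ℕ → ℕ) : Prop where
  regup : κup.IsRegular
  regdn : κdn.IsRegular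
  dec : ∀ i j, i < j → j < κup.ord → LtStar (up j) (up i)
  inc : ∀ a b, a < b → b < κdn.ord → LtStar (dn a) (dn b)
  cross : ∀ i, i < κup.ord → ∀ a, a < κdn.ord → LtStar (dn a) (up i)
  dense_up : ∀ h : ℕ → ℕ, (∀ i, i < κup.ord → LeStar h (up i)) →
      ∃ a, a < κdn.ord ∧ LeStar h (dn a)
  dense_dn : ∀ h : ℕ → ℕ, (∀ a, a < κdn.ord → LeStar (dn a) h) →
      ∃ i, i < κup.ord ∧ LeStar (up i) h

theorem peculiarCut_below_iff (κup κdn : Cardinal) (up dn : Ordinal → ℕ → ℕ)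
    (pc : PeculiarCut κup κdn up dn) (A : Set ℕ) (hA : A.Infinite) (η : ℕ → ℕ) :
    (∀ a, a < κup.ord → LtBd A η (up a)) ↔
      (∃ b₀, b₀ < κdn.ord ∧ ∀ b, b₀ ≤ b → b < κdn.ord → LtBd A η (dn b)) := by
  constructor
  · intro H
    classical
    set h : ℕ → ℕ := fun n => if n ∈ A then η n + 1 else 0 with hh
    have hle : ∀ i, i < κup.ord → LeStar h (up i) := by
      intro i hi
      have : {n | up i n < h n} ⊆ A ∩ {n | up i n ≤ η n} := by
        intro n hn
        simp only [Set.mem_setOf_eq, hh] at hn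
        by_cases hnA : n ∈ A
        · simp [hnA] at hn
          exact ⟨hnA, by simp only [Set.mem_setOf_eq]; omega⟩
        · simp [hnA] at hn
      exact ((H i hi).subset this)
    obtain ⟨a₀, ha₀, hle₀⟩ := pc.dense_up h hle
    refine ⟨a₀, ha₀, ?_⟩
    intro b hb hb'
    have key : (A ∩ {n | dn a₀ n ≤ η n}).Finite := by
      apply hle₀.subset
      intro n hn
      simp only [Set.mem_inter_iff, Set.mem_setOf_eq] at hn
      simp only [Set.mem_setOf_eq, hh, if_pos hn.1]
      omega
    rcases eq_or_lt_of_le hb with rfl | hlt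
    · exact key
    · have hfin := pc.inc a₀ b hlt hb'
      apply (key.union hfin).subset
      intro n hn
      simp only [Set.mem_inter_iff, Set.mem_setOf_eq] at hn
      by_cases hd : dn a₀ n ≤ η n
      · exact Or.inl ⟨hn.1, hd⟩
      · exact Or.inr (by simp only [Set.mem_setOf_eq]; omega)
  · rintro ⟨b₀, hb₀, H⟩ i hi
    have hfin := H b₀ le_rfl hb₀
    have hcross := pc.cross i hi b₀ hb₀
    apply (hfin.union hcross).subset
    intro n hn
    simp only [Set.mem_inter_iff, Set.mem_setOf_eq] at hn
    by_cases hd : dn b₀ n ≤ η n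
    · exact Or.inl ⟨hn.1, hd⟩
    · exact Or.inr (by simp only [Set.mem_setOf_eq]; omega)
end

section
/- Let (⟨η^up_α : α < κ_up⟩, ⟨η^dn_β : β < κ_dn⟩) be a (κ_up,κ_dn)-peculiar cut, let A ⊆ ω be infinite, and let η : ω → ω. Then ¬(η^up_α <_{J^bd_A} η) for every α < κ_up if and only if ¬(η^dn_β <_{J^bd_A} η) for every large enough β < κ_dn. -/
/-!
If cofinally many `dn b` lie below `η` modulo `J^bd_A`, then, the `dn` being `<*`-increasing,
all of them do. Patching `η` outside `A` by `up 0` gives a function `≤*`-above every `dn b`,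
so density of the cut puts some `up a` `≤*`-below it, and then `up (a + 1) <* up a` lies below
`η` modulo `J^bd_A`. The converse is immediate from `dn b <* up a`.
-/

section Orders

variable {A : Set ℕ} {f g h : ℕ → ℕ}

theorem LtStar.leStar (hfg : LtStar f g) : LeStar f g :=
  hfg.subset fun _ => Nat.le_of_lt

theorem LtStar.trans_leStar (hfg : LtStar f g) (hgh : LeStar g h) : LtStar f h := by
  refine (hfg.union hgh).subset fun n hn => ?_
  by_contra hn'
  simp only [Set.mem_union, Set.mem_ofPred_eq, not_or, not_le, not_lt] at hn hn'
  omega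

theorem LtStar.trans_ltBd (hfg : LtStar f g) (hgh : LtBd A g h) : LtBd A f h := by
  refine (hfg.union hgh).subset fun n ⟨hnA, hn⟩ => ?_
  by_contra hn'
  simp only [Set.mem_union, Set.mem_inter_iff, Set.mem_ofPred_eq, not_or, not_and, not_le]
    at hn hn'
  exact absurd (hn'.2 hnA) (by omega)

theorem LtStar.ltBd_of_eqOn {η : ℕ → ℕ} (hfg : LtStar f g) (hgη : Set.EqOn g η A) :
    LtBd A f η :=
  hfg.subset fun n ⟨hnA, hn⟩ => show g n ≤ f n from hgη hnA ▸ hn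

theorem ltStar_piecewise {g' : ℕ → ℕ} [DecidablePred (· ∈ A)] (hfg : LtBd A f g)
    (hfg' : LtStar f g') : LtStar f (A.piecewise g g') := by
  refine (hfg.union hfg').subset fun n hn => ?_
  by_cases hnA : n ∈ A
  · exact Or.inl ⟨hnA, by simpa [hnA] using hn⟩
  · exact Or.inr (by simpa [hnA] using hn)

end Orders

namespace PeculiarCut

variable {κup κdn : Cardinal} {up dn : Ordinal → ℕ → ℕ} {A : Set ℕ} {η : ℕ → ℕ}

theorem ltBd_dn_of_le (pc : PeculiarCut κup κdn up dn) {b c : Ordinal} (hbc : b ≤ c)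
    (hc : c < κdn.ord) (h : LtBd A (dn c) η) : LtBd A (dn b) η := by
  rcases hbc.eq_or_lt with rfl | hbc
  · exact h
  · exact (pc.inc b c hbc hc).trans_ltBd h

theorem exists_ltBd_up (pc : PeculiarCut κup κdn up dn)
    (h : ∀ b < κdn.ord, LtBd A (dn b) η) : ∃ a < κup.ord, LtBd A (up a) η := by
  classical
  have hlim : Order.IsSuccLimit κup.ord := Cardinal.isSuccLimit_ord pc.regup.aleph0_le
  obtain ⟨a, ha, hle⟩ := pc.dense_dn (A.piecewise η (up 0)) fun b hb =>
    (ltStar_piecewise (h b hb) (pc.cross 0 hlim.bot_lt b hb)).leStar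
  have hsucc : Order.succ a < κup.ord := hlim.succ_lt ha
  have hup : LtStar (up (Order.succ a)) (A.piecewise η (up 0)) :=
    (pc.dec a _ (Order.lt_succ a) hsucc).trans_leStar hle
  exact ⟨Order.succ a, hsucc, hup.ltBd_of_eqOn (Set.piecewise_eqOn A η (up 0))⟩

end PeculiarCut

theorem peculiarCut_not_above_iff_general (κup κdn : Cardinal) (up dn : Ordinal → ℕ → ℕ)
    (pc : PeculiarCut κup κdn up dn) (A : Set ℕ) (η : ℕ → ℕ) :
    (∀ a, a < κup.ord → ¬ LtBd A (up a) η) ↔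
      (∃ b₀, b₀ < κdn.ord ∧ ∀ b, b₀ ≤ b → b < κdn.ord → ¬ LtBd A (dn b) η) := by
  constructor
  · intro H
    by_contra! hcofinal
    obtain ⟨a, ha, hlt⟩ := pc.exists_ltBd_up fun b hb =>
      let ⟨c, hbc, hc, hltc⟩ := hcofinal b hb
      pc.ltBd_dn_of_le hbc hc hltc
    exact H a ha hlt
  · rintro ⟨b₀, hb₀, H⟩ a ha hlt
    exact H b₀ le_rfl hb₀ ((pc.cross a ha b₀ hb₀).trans_ltBd hlt)

theorem peculiarCut_not_above_iff (κup κdn : Cardinal) (up dn : Ordinal → ℕ → ℕ)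
    (pc : PeculiarCut κup κdn up dn) (A : Set ℕ) (hA : A.Infinite) (η : ℕ → ℕ) :
    (∀ a, a < κup.ord → ¬ LtBd A (up a) η) ↔
      (∃ b₀, b₀ < κdn.ord ∧ ∀ b, b₀ ≤ b → b < κdn.ord → ¬ LtBd A (dn b) η) :=
  peculiarCut_not_above_iff_general κup κdn up dn pc A η
end

section
/- Let η̄ = ⟨η_α : α < δ⟩ be a <*-increasing sequence in ωω, let α(*) < δ, n* < ω, ρ* ∈ ω^{<ω} with lg(ρ*) ≤ n*. Suppose p, q ∈ Q_η̄ satisfy: ρ^p = ρ^q = ρ*; α^p, α^q < α(*); η_{α^p}↾n* = η_{α^q}↾n*; g^p↾n* = g^q↾n*; and for all n ≥ n*: η_{α^p}(n) ≤ η_{α(*)}(n) ≤ g^p(n) and η_{α^q}(n) ≤ η_{α(*)}(n) ≤ g^q(n). Then p and q are compatible in Q_η̄: there is r ∈ Q_η̄ with p ≤ r and q ≤ r. -/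
/-- `f <* ν` for `f : ℕ → ℕ`, `ν : ℕ → ω+1` : `{n : f n ≥ ν n}` is finite. -/
def LtStarT (f : ℕ → ℕ) (ν : ℕ → ℕ∞) : Prop := {n | ν n ≤ (f n : ℕ∞)}.Finite

/-- A condition of the forcing `Q_η̄`: a triple `(ρ, α, g)` with `ρ ∈ ω^{<ω}`,
`α < δ`, `g ∈ F_η̄`, and `η_α(n) ≤ g(n)` for all `n ≥ lg ρ`. -/
structure QCond (δ : Ordinal) (η : Ordinal → ℕ → ℕ) where
  ρ : List ℕ
  α : Ordinal
  g : ℕ → ℕ∞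
  hα : α < δ
  hg : ∀ β, β < δ → LtStarT (η β) g
  hbound : ∀ n, ρ.length ≤ n → (η α n : ℕ∞) ≤ g n

/-- The order of `Q_η̄`. -/
def QLE {δ : Ordinal} {η : Ordinal → ℕ → ℕ} (p q : QCond δ η) : Prop :=
  p.ρ <+: q.ρ ∧ p.α ≤ q.α ∧ (∀ n, q.g n ≤ p.g n) ∧
    (∀ n, q.ρ.length ≤ n → η p.α n ≤ η q.α n) ∧
    (∀ n, p.ρ.length ≤ n → n < q.ρ.length →
      η p.α n ≤ q.ρ.getD n 0 ∧ (q.ρ.getD n 0 : ℕ∞) ≤ p.g n)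

/-- Conditions with the same stem whose data agree below `n*` and are
interleaved with a common `η_{α(*)}` above `n*` are compatible in `Q_η̄`. -/
theorem QCond_compatible (δ : Ordinal) (η : Ordinal → ℕ → ℕ)
    (hinc : ∀ a b, a < b → b < δ → LtStar (η a) (η b))
    (αstar : Ordinal) (hαstar : αstar < δ) (nstar : ℕ) (ρstar : List ℕ)
    (hρ : ρstar.length ≤ nstar)
    (p q : QCond δ η)
    (hpρ : p.ρ = ρstar) (hqρ : q.ρ = ρstar)
    (hpα : p.α < αstar) (hqα : q.α < αstar)
    (hη : ∀ n, n < nstar → η p.α n = η q.α n)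
    (hgeq : ∀ n, n < nstar → p.g n = q.g n)
    (hp : ∀ n, nstar ≤ n → η p.α n ≤ η αstar n ∧ (η αstar n : ℕ∞) ≤ p.g n)
    (hq : ∀ n, nstar ≤ n → η q.α n ≤ η αstar n ∧ (η αstar n : ℕ∞) ≤ q.g n) :
    ∃ r : QCond δ η, QLE p r ∧ QLE q r := by
  set L : List ℕ := (List.range (nstar - ρstar.length)).map
    (fun i => η p.α (ρstar.length + i)) with hL
  have hLlen : (ρstar ++ L).length = nstar := by
    simp [hL]; omega
  have hget : ∀ n, ρstar.length ≤ n → n < nstar →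
      (ρstar ++ L).getD n 0 = η p.α n := by
    intro n h1 h2
    have hn : n < (ρstar ++ L).length := by omega
    rw [List.getD_eq_getElem _ _ hn, List.getElem_append_right (by omega)]
    simp [hL]
    congr 1
    omega
  refine ⟨⟨ρstar ++ L, αstar, fun n => min (p.g n) (q.g n), hαstar, ?_, ?_⟩, ?_, ?_⟩
  · intro β hβ
    have := (p.hg β hβ).union (q.hg β hβ)
    refine this.subset ?_
    intro n hn
    simp only [Set.mem_setOf_eq, min_le_iff] at hn
    rcases hn with h | h
    · exact Or.inl h
    · exact Or.inr h
  · intro n hn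
    rw [hLlen] at hn
    exact le_min (hp n hn).2 (hq n hn).2
  · refine ⟨hpρ ▸ List.prefix_append _ _, le_of_lt hpα, fun n => min_le_left _ _, ?_, ?_⟩
    · intro n hn
      rw [hLlen] at hn
      exact (hp n hn).1
    · intro n h1 h2
      rw [hpρ] at h1
      rw [hLlen] at h2
      rw [hget n h1 h2]
      exact ⟨le_refl _, p.hbound n (by rw [hpρ]; exact h1)⟩
  · refine ⟨hqρ ▸ List.prefix_append _ _, le_of_lt hqα, fun n => min_le_right _ _, ?_, ?_⟩
    · intro n hn
      rw [hLlen] at hn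
      exact (hq n hn).1
    · intro n h1 h2
      rw [hqρ] at h1
      rw [hLlen] at h2
      rw [hget n h1 h2, ← hη n h2]
      exact ⟨le_refl _, hη n h2 ▸ (hgeq n h2 ▸ q.hbound n (by rw [hqρ]; exact h1))⟩
end

section
/- Let δ be a limit ordinal with cf(δ) > ℵ₁ and let η̄ = ⟨η_α : α < δ⟩ be a <*-increasing sequence in ωω. Then the forcing notion Q_η̄ satisfies the countable chain condition: every uncountable subset of Q_η̄ contains two compatible conditions. -/
open Cardinal Filter

theorem Set.exists_subset_mk_eq_aleph_one {α : Type*} {S : Set α} (hS : ¬ S.Countable) :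
    ∃ T ⊆ S, #T = ℵ₁ := by
  rw [← le_aleph0_iff_set_countable, not_le, ← aleph_one_le_iff] at hS
  exact le_mk_iff_exists_subset.1 hS

theorem Ordinal.exists_lt_forall_le_of_lift_mk_lt_cof {ι : Type v} {f : ι → Ordinal.{u}}
    {a : Ordinal.{u}} (hι : Cardinal.lift.{u} #ι < (Ordinal.lift.{v} a).cof) (hf : ∀ i, f i < a) :
    ∃ b < a, ∀ i, f i ≤ b :=
  ⟨⨆ i, f i, lift_iSup_lt_of_lt_cof hι hf,
    le_ciSup ⟨a, by rintro _ ⟨i, rfl⟩; exact (hf i).le⟩⟩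

theorem List.getD_append_map_range' {α : Type*} (ρ : List α) (f : ℕ → α) (d : α) {m n : ℕ}
    (h₁ : ρ.length ≤ n) (h₂ : n < ρ.length + m) :
    (ρ ++ (List.range' ρ.length m).map f).getD n d = f n := by
  rw [List.getD_append_right _ _ _ _ h₁, List.getD_eq_getElem _ _ (by simp only [List.length_map, List.length_range']; omega)]
  simp only [List.getElem_map, List.getElem_range']
  congr 1
  omega

theorem List.map_range_eq_map_range {α : Type*} {f g : ℕ → α} {N M : ℕ}
    (h : (List.range N).map f = (List.range M).map g) : N = M ∧ ∀ n < N, f n = g n := by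
  obtain rfl : N = M := by simpa using congrArg List.length h
  exact ⟨rfl, fun n hn => List.map_inj_left.1 h n (List.mem_range.2 hn)⟩

theorem LtStar.eventually_lt {f g : ℕ → ℕ} (h : LtStar f g) : ∀ᶠ n in atTop, f n < g n := by
  rw [← Nat.cofinite_eq_atTop, eventually_cofinite]
  simpa [LtStar] using h

theorem LtStarT.eventually_lt {f : ℕ → ℕ} {ν : ℕ → ℕ∞} (h : LtStarT f ν) :
    ∀ᶠ n in atTop, (f n : ℕ∞) < ν n := by
  rw [← Nat.cofinite_eq_atTop, eventually_cofinite]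
  simpa [LtStarT] using h

theorem QLE.of_getD_eq {δ : Ordinal} {η : Ordinal → ℕ → ℕ} {p r : QCond δ η} (hρ : p.ρ <+: r.ρ)
    (hα : p.α ≤ r.α) (hg : ∀ n, r.g n ≤ p.g n) (hη : ∀ n, r.ρ.length ≤ n → η p.α n ≤ η r.α n)
    (hext : ∀ n, p.ρ.length ≤ n → n < r.ρ.length → r.ρ.getD n 0 = η p.α n) : QLE p r :=
  ⟨hρ, hα, hg, hη, fun n h₁ h₂ => by rw [hext n h₁ h₂]; exact ⟨le_rfl, p.hbound n h₁⟩⟩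

namespace QCond

variable {δ : Ordinal} {η : Ordinal → ℕ → ℕ}

theorem exists_threshold (hinc : ∀ a b, a < b → b < δ → LtStar (η a) (η b)) (p : QCond δ η)
    {A : Ordinal} (hA : A < δ) (hpA : p.α ≤ A) :
    ∃ N, p.ρ.length ≤ N ∧ ∀ n, N ≤ n → η p.α n ≤ η A n ∧ (η A n : ℕ∞) ≤ p.g n := by
  have hη : ∀ᶠ n in atTop, η p.α n ≤ η A n := by
    rcases hpA.lt_or_eq with hlt | rfl
    · exact (hinc _ _ hlt hA).eventually_lt.mono fun _ => le_of_lt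
    · exact .of_forall fun _ => le_rfl
  have hg := (p.hg A hA).eventually_lt.mono fun _ => le_of_lt
  obtain ⟨N, hN⟩ := eventually_atTop.1 ((eventually_ge_atTop p.ρ.length).and (hη.and hg))
  exact ⟨N, (hN N le_rfl).1, fun n hn => (hN n hn).2⟩

noncomputable def amalgam (p q : QCond δ η) {A : Ordinal} (hA : A < δ) (N : ℕ)
    (hN : ∀ n, N ≤ n → (η A n : ℕ∞) ≤ p.g n ∧ (η A n : ℕ∞) ≤ q.g n) : QCond δ η where
  ρ := p.ρ ++ (List.range' p.ρ.length (N - p.ρ.length)).map (η p.α)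
  α := A
  g := fun n => min (p.g n) (q.g n)
  hα := hA
  hg β hβ := ((p.hg β hβ).union (q.hg β hβ)).subset fun n hn => by simpa using hn
  hbound n hn := by
    simp only [List.length_append, List.length_map, List.length_range'] at hn
    exact le_min_iff.2 (hN n (by omega))

theorem exists_common_upper_bound {p q : QCond δ η} (hρ : p.ρ = q.ρ) {N : ℕ}
    (hN : p.ρ.length ≤ N) (hagree : ∀ n < N, η p.α n = η q.α n) {A : Ordinal} (hA : A < δ)
    (hpA : p.α ≤ A) (hqA : q.α ≤ A)
    (hp : ∀ n, N ≤ n → η p.α n ≤ η A n ∧ (η A n : ℕ∞) ≤ p.g n)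
    (hq : ∀ n, N ≤ n → η q.α n ≤ η A n ∧ (η A n : ℕ∞) ≤ q.g n) :
    ∃ r : QCond δ η, QLE p r ∧ QLE q r := by
  let r := amalgam p q hA N fun n hn => ⟨(hp n hn).2, (hq n hn).2⟩
  have hlen : r.ρ.length = N := by
    simp only [r, amalgam, List.length_append, List.length_map, List.length_range']
    omega
  have hext : ∀ n, p.ρ.length ≤ n → n < r.ρ.length → r.ρ.getD n 0 = η p.α n := fun n h₁ h₂ =>
    List.getD_append_map_range' _ _ _ h₁ (by omega)
  refine ⟨r, QLE.of_getD_eq (List.prefix_append _ _) hpA (fun n => min_le_left _ _)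
      (fun n hn => (hp n (hlen ▸ hn)).1) hext,
    QLE.of_getD_eq (hρ ▸ List.prefix_append _ _) hqA (fun n => min_le_right _ _)
      (fun n hn => (hq n (hlen ▸ hn)).1) fun n h₁ h₂ => ?_⟩
  rw [← hρ] at h₁
  rw [hext n h₁ h₂, hagree n (hlen ▸ h₂)]

end QCond

theorem QCond_ccc_general (δ : Ordinal)
    (hcof : Cardinal.aleph 1 < δ.cof) (η : Ordinal → ℕ → ℕ)
    (hinc : ∀ a b, a < b → b < δ → LtStar (η a) (η b)) :
    ∀ S : Set (QCond δ η), ¬ S.Countable →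
      ∃ p ∈ S, ∃ q ∈ S, p ≠ q ∧ ∃ r : QCond δ η, QLE p r ∧ QLE q r := by
  intro S hS
  obtain ⟨T, hTS, hT⟩ := Set.exists_subset_mk_eq_aleph_one hS
  obtain ⟨A, hA, hαA⟩ := Ordinal.exists_lt_forall_le_of_lift_mk_lt_cof (f := fun p : T => p.1.α)
    (by rwa [hT, lift_aleph, Ordinal.lift_one, ← Ordinal.lift_cof, aleph_one_lt_lift])
    fun p => p.1.hα
  choose N hLN hN using fun p : T => p.1.exists_threshold hinc hA (hαA p)
  have hT_unc : ¬ Countable T := by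
    rw [Set.countable_coe_iff, ← le_aleph0_iff_set_countable, hT, not_le]
    exact aleph0_lt_aleph_one
  obtain ⟨p, q, hpq, hne⟩ := Function.not_injective_iff.1 fun hinj : Function.Injective
    (fun p : T => (p.1.ρ, (List.range (N p)).map (η p.1.α))) => hT_unc hinj.countable
  obtain ⟨hρ, hηpq⟩ := Prod.mk.inj hpq
  obtain ⟨hNpq, hagree⟩ := List.map_range_eq_map_range hηpq
  refine ⟨p, hTS p.2, q, hTS q.2, Subtype.coe_ne_coe.2 hne, ?_⟩
  exact QCond.exists_common_upper_bound hρ (hLN p) hagree hA (hαA p) (hαA q) (hN p)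
    (hNpq ▸ hN q)

/-- If `cf(δ) > ℵ₁` then `Q_η̄` satisfies the c.c.c.: every uncountable set of
conditions contains two (distinct) compatible conditions. -/
theorem QCond_ccc (δ : Ordinal) (hδ : Order.IsSuccLimit δ)
    (hcof : Cardinal.aleph 1 < δ.cof) (η : Ordinal → ℕ → ℕ)
    (hinc : ∀ a b, a < b → b < δ → LtStar (η a) (η b)) :
    ∀ S : Set (QCond δ η), ¬ S.Countable →
      ∃ p ∈ S, ∃ q ∈ S, p ≠ q ∧ ∃ r : QCond δ η, QLE p r ∧ QLE q r :=
  QCond_ccc_general δ hcof η hinc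
end
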